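/- For 0 < α < 1, every integer m ≥ 1, and all n ≥ 1, (Γ(2-α) / Γ(1+(m-1)α)) · Σ_{j=1}^{n-1} p_{n-j} j^{(m-1)α} ≤ n^{mα} / Γ(1+mα). -/

import Mathlib

/-!
Put `powIncr γ i = (i + 1) ^ γ - i ^ γ`, so that `a = powIncr (1 - α)`. The recursion for `p`
says exactly that `∑_{k ≤ n} a_k p_{n-k} = 1`, and `p ≥ 0` because `a` is decreasing.

Writing both increments as integrals over `[i, i + 1]` and applying Chebyshev's integral
inequality there (`u ^ (α - 1)` decreases while `(j + 1 - u) ^ (-α)` increases) gives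
`Γ(2 - α) Γ(1 + α) = α (1 - α) B(α, 1 - α) ≤ ∑_{k ≤ j} powIncr α k * a_{j-k}`. Convolving this
with `p` and using the identity above bounds `Γ(2 - α) Γ(1 + α) ∑_{k=1}^M p_k` by
`∑_{k < M} powIncr α k = M ^ α`.

For general `m`, Abel summation against `j ^ β` with `β = (m - 1) α` reduces the claim to
`∑_l powIncr β l * (n - 1 - l) ^ α ≤ β ∫_0^n u ^ (β - 1) (n - u) ^ α du`, a Beta integral equal to
`Γ(1 + β) Γ(1 + α) / Γ(1 + β + α) * n ^ (β + α)`.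
-/

open Real Finset MeasureTheory

theorem integral_mul_le_integral_mul_integral_of_antivaryOn {Ω : Type*} [MeasurableSpace Ω]
    {μ : Measure Ω} [IsProbabilityMeasure μ] {F G : Ω → ℝ} {s : Set Ω} (hF : Integrable F μ)
    (hG : Integrable G μ) (hFG : Integrable (fun x => F x * G x) μ) (hFG_anti : AntivaryOn F G s)
    (hs : ∀ᵐ x ∂μ, x ∈ s) :
    ∫ x, F x * G x ∂μ ≤ (∫ x, F x ∂μ) * ∫ x, G x ∂μ := by
  have hinner : ∀ x, ∫ y, (F x - F y) * (G x - G y) ∂μ =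
      F x * G x - F x * ∫ y, G y ∂μ - G x * ∫ y, F y ∂μ + ∫ y, F y * G y ∂μ := by
    intro x
    have hexp : (fun y => (F x - F y) * (G x - G y)) =
        fun y => F x * G x - F x * G y - G x * F y + F y * G y := by
      ext y; ring
    rw [hexp, integral_add (by fun_prop) hFG, integral_sub (by fun_prop) (by fun_prop),
      integral_sub (by fun_prop) (by fun_prop), integral_const, integral_const_mul,
      integral_const_mul]
    simp
  have houter : ∫ x, ∫ y, (F x - F y) * (G x - G y) ∂μ ∂μ =
      2 * ∫ x, F x * G x ∂μ - 2 * ((∫ x, F x ∂μ) * ∫ x, G x ∂μ) := by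
    simp_rw [hinner]
    rw [integral_add (by fun_prop) (integrable_const _), integral_sub (by fun_prop) (by fun_prop),
      integral_sub hFG (by fun_prop), integral_const, integral_mul_const, integral_mul_const]
    simp only [probReal_univ, smul_eq_mul, one_mul]
    ring
  have hnonpos : ∫ x, ∫ y, (F x - F y) * (G x - G y) ∂μ ∂μ ≤ 0 :=
    integral_nonpos_of_ae <| hs.mono fun x hx =>
      integral_nonpos_of_ae <| hs.mono fun y hy => hFG_anti.sub_mul_sub_nonpos hy hx
  linarith

lemma intervalIntegrable_rpow_mul_sub_rpow {s t x : ℝ} (hs : 0 < s) (ht : 0 < t) (hx : 0 < x) :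
    IntervalIntegrable (fun u => u ^ (s - 1) * (x - u) ^ (t - 1)) volume 0 x := by
  have hleft : IntervalIntegrable (fun u => u ^ (s - 1) * (x - u) ^ (t - 1)) volume 0 (x / 2) := by
    refine (intervalIntegral.intervalIntegrable_rpow' (by linarith)).mul_continuousOn
      (ContinuousOn.rpow_const (by fun_prop) fun u hu => Or.inl ?_)
    rw [Set.uIcc_of_le (by linarith)] at hu
    linarith [hu.2]
  have hright : IntervalIntegrable (fun u => u ^ (s - 1) * (x - u) ^ (t - 1)) volume (x / 2) x := by
    have h := ((intervalIntegral.intervalIntegrable_rpow' (r := t - 1) (a := 0) (b := x / 2)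
      (by linarith)).comp_sub_left x).symm
    rw [sub_zero, sub_half] at h
    refine h.continuousOn_mul (ContinuousOn.rpow_const (by fun_prop) fun u hu => Or.inl ?_)
    rw [Set.uIcc_of_le (by linarith)] at hu
    linarith [hu.1]
  exact hleft.trans hright

lemma integral_rpow_mul_sub_rpow {s t x : ℝ} (hs : 0 < s) (ht : 0 < t) (hx : 0 < x) :
    ∫ u in (0 : ℝ)..x, u ^ (s - 1) * (x - u) ^ (t - 1) =
      Gamma s * Gamma t / Gamma (s + t) * x ^ (s + t - 1) := by
  apply Complex.ofReal_injective
  have hB := Complex.betaIntegral_scaled s t hx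
  have hΓ := Complex.Gamma_mul_Gamma_eq_betaIntegral (s := s) (t := t) (by simpa) (by simpa)
  simp only [← Complex.ofReal_add, Complex.Gamma_ofReal] at hΓ hB
  have hΓst : (Gamma (s + t) : ℂ) ≠ 0 := mod_cast (Gamma_pos_of_pos (add_pos hs ht)).ne'
  rw [← intervalIntegral.integral_ofReal, intervalIntegral.integral_congr
    (g := fun u : ℝ => (u : ℂ) ^ ((s : ℂ) - 1) * ((x : ℂ) - u) ^ ((t : ℂ) - 1)), hB]
  · push_cast
    rw [hΓ, Complex.ofReal_cpow hx.le]
    push_cast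
    field_simp
  · intro u hu
    rw [Set.uIcc_of_le hx.le] at hu
    push_cast [Complex.ofReal_cpow hu.1, Complex.ofReal_cpow (sub_nonneg.2 hu.2)]
    rfl

lemma add_one_rpow_sub_rpow_eq_mul_integral {γ : ℝ} (hγ : 0 < γ) (y : ℝ) :
    (y + 1) ^ γ - y ^ γ = γ * ∫ u in y..y + 1, u ^ (γ - 1) := by
  rw [integral_rpow (Or.inl (by linarith)), sub_add_cancel]
  field_simp

lemma mul_integral_rpow_mul_sub_rpow_le {s t x y : ℝ} (hs0 : 0 < s) (hs1 : s ≤ 1) (ht0 : 0 < t)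
    (ht1 : t ≤ 1) (hy : 0 ≤ y) (hyx : y + 1 ≤ x) :
    s * t * ∫ u in y..y + 1, u ^ (s - 1) * (x - u) ^ (t - 1) ≤
      ((y + 1) ^ s - y ^ s) * ((x - y) ^ t - (x - y - 1) ^ t) := by
  have hle : y ≤ y + 1 := by linarith
  have hG : (x - y) ^ t - (x - y - 1) ^ t = t * ∫ u in y..y + 1, (x - u) ^ (t - 1) := by
    have h := add_one_rpow_sub_rpow_eq_mul_integral ht0 (x - y - 1)
    rw [sub_add_cancel] at h
    rwa [intervalIntegral.integral_comp_sub_left (fun v => v ^ (t - 1)), sub_add_eq_sub_sub]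
  have hIoo : ∀ f : ℝ → ℝ, ∫ u in y..y + 1, f u = ∫ u in Set.Ioo y (y + 1), f u := fun f => by
    rw [intervalIntegral.integral_of_le hle, integral_Ioc_eq_integral_Ioo]
  have : IsProbabilityMeasure (volume.restrict (Set.Ioo y (y + 1))) :=
    ⟨by simp⟩
  have hFint : IntervalIntegrable (fun u : ℝ => u ^ (s - 1)) volume y (y + 1) :=
    intervalIntegral.intervalIntegrable_rpow' (by linarith)
  have hGint : IntervalIntegrable (fun u : ℝ => (x - u) ^ (t - 1)) volume y (y + 1) := by
    have h := (intervalIntegral.intervalIntegrable_rpow' (r := t - 1) (a := x - y)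
      (b := x - y - 1) (by linarith)).comp_sub_left x
    rwa [sub_sub_cancel, sub_sub, sub_sub_cancel] at h
  have hFGint : IntervalIntegrable (fun u => u ^ (s - 1) * (x - u) ^ (t - 1)) volume y (y + 1) :=
    (intervalIntegrable_rpow_mul_sub_rpow hs0 ht0 (by linarith)).mono_set
      (by rw [Set.uIcc_of_le hle, Set.uIcc_of_le (by linarith)]; exact Set.Icc_subset_Icc hy hyx)
  have hanti : AntivaryOn (fun u : ℝ => u ^ (s - 1)) (fun u => (x - u) ^ (t - 1))
      (Set.Ioo y (y + 1)) := by
    refine AntitoneOn.antivaryOn (fun u hu v hv huv => ?_) fun u hu v hv huv => ?_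
    · exact rpow_le_rpow_of_nonpos (by linarith [hu.1]) huv (by linarith)
    · exact rpow_le_rpow_of_nonpos (by linarith [hv.2]) (by linarith) (by linarith)
  rw [add_one_rpow_sub_rpow_eq_mul_integral hs0, hG, hIoo, hIoo, hIoo, mul_mul_mul_comm]
  gcongr
  exact integral_mul_le_integral_mul_integral_of_antivaryOn
    (hFint.1.mono_set Set.Ioo_subset_Ioc_self) (hGint.1.mono_set Set.Ioo_subset_Ioc_self)
    (hFGint.1.mono_set Set.Ioo_subset_Ioc_self) hanti (ae_restrict_mem measurableSet_Ioo)

noncomputable def powIncr (γ : ℝ) (i : ℕ) : ℝ := ((i : ℝ) + 1) ^ γ - (i : ℝ) ^ γ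

lemma powIncr_nonneg {γ : ℝ} (hγ : 0 ≤ γ) (i : ℕ) : 0 ≤ powIncr γ i :=
  sub_nonneg.2 (rpow_le_rpow i.cast_nonneg (by linarith) hγ)

lemma powIncr_succ_le {γ : ℝ} (hγ0 : 0 ≤ γ) (hγ1 : γ ≤ 1) (i : ℕ) :
    powIncr γ (i + 1) ≤ powIncr γ i := by
  have h := (concaveOn_rpow hγ0 hγ1).slope_anti_adjacent (x := i) (y := i + 1) (z := i + 2)
    (Set.mem_Ici.2 i.cast_nonneg) (Set.mem_Ici.2 (by positivity)) (by linarith) (by linarith)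
  simp only [add_sub_cancel_left, div_one, show (i : ℝ) + 2 - (i + 1) = 1 by ring] at h
  simpa [powIncr, add_assoc, one_add_one_eq_two] using h

lemma sum_range_powIncr {γ : ℝ} (hγ : γ ≠ 0) (n : ℕ) :
    ∑ i ∈ range n, powIncr γ i = (n : ℝ) ^ γ := by
  simpa [powIncr, zero_rpow hγ] using sum_range_sub (fun i : ℕ => (i : ℝ) ^ γ) n

lemma powIncr_zero {γ : ℝ} (hγ : γ ≠ 0) : powIncr γ 0 = 1 := by
  simp [powIncr, zero_rpow hγ]

lemma le_sum_powIncr_mul_powIncr {s t : ℝ} (hs0 : 0 < s) (hs1 : s ≤ 1) (ht0 : 0 < t)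
    (ht1 : t ≤ 1) (j : ℕ) :
    Gamma (s + 1) * Gamma (t + 1) / Gamma (s + t) * ((j : ℝ) + 1) ^ (s + t - 1) ≤
      ∑ i ∈ range (j + 1), powIncr s i * powIncr t (j - i) := by
  have hx : (0 : ℝ) < j + 1 := by positivity
  have hint := intervalIntegrable_rpow_mul_sub_rpow hs0 ht0 hx
  have hsplit := intervalIntegral.sum_integral_adjacent_intervals (a := fun i : ℕ => (i : ℝ))
    (n := j + 1) (f := fun u => u ^ (s - 1) * ((j : ℝ) + 1 - u) ^ (t - 1)) (μ := volume)
    fun k hk => hint.mono_set (by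
      rw [Set.uIcc_of_le (by simp), Set.uIcc_of_le hx.le]
      exact Set.Icc_subset_Icc k.cast_nonneg (by exact_mod_cast hk))
  push_cast at hsplit
  calc Gamma (s + 1) * Gamma (t + 1) / Gamma (s + t) * ((j : ℝ) + 1) ^ (s + t - 1)
      = s * t * ∫ u in (0 : ℝ)..(j + 1), u ^ (s - 1) * ((j : ℝ) + 1 - u) ^ (t - 1) := by
        rw [integral_rpow_mul_sub_rpow hs0 ht0 hx, Gamma_add_one hs0.ne', Gamma_add_one ht0.ne']
        ring
    _ = ∑ i ∈ range (j + 1),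
          s * t * ∫ u in (i : ℝ)..(i + 1), u ^ (s - 1) * ((j : ℝ) + 1 - u) ^ (t - 1) := by
        rw [← mul_sum, hsplit]
    _ ≤ ∑ i ∈ range (j + 1), powIncr s i * powIncr t (j - i) := by
        refine sum_le_sum fun i hi => ?_
        have hij : i ≤ j := Nat.lt_succ_iff.1 (mem_range.1 hi)
        have hle := mul_integral_rpow_mul_sub_rpow_le hs0 hs1 ht0 ht1 i.cast_nonneg
          (x := j + 1) (by exact_mod_cast Nat.succ_le_succ hij)
        refine hle.trans_eq ?_
        rw [powIncr, powIncr, Nat.cast_sub hij]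
        ring_nf

lemma sum_Icc_one_eq_sum_range {M : Type*} [AddCommMonoid M] (f : ℕ → M) (n : ℕ) :
    ∑ j ∈ Icc 1 n, f j = ∑ k ∈ range n, f (k + 1) := by
  rw [range_eq_Ico, sum_Ico_add' f 0 n 1, zero_add, Ico_add_one_right_eq_Icc]

lemma sum_range_mul_eq_one_of_renewal {a p : ℕ → ℝ} (ha0 : a 0 = 1) (hp0 : p 0 = 1)
    (hp : ∀ n : ℕ, 1 ≤ n → p n = ∑ j ∈ Icc 1 n, (a (j - 1) - a j) * p (n - j)) (n : ℕ) :
    ∑ k ∈ range (n + 1), a k * p (n - k) = 1 := by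
  induction n with
  | zero => simp [ha0, hp0]
  | succ n ih =>
    rw [sum_range_succ', Nat.sub_zero, ha0, one_mul, hp (n + 1) (Nat.succ_pos n),
      sum_Icc_one_eq_sum_range, ← ih, ← sum_add_distrib]
    refine sum_congr rfl fun k _ => ?_
    rw [Nat.add_sub_cancel, Nat.add_sub_add_right]
    ring

lemma nonneg_of_renewal {a p : ℕ → ℝ} (ha : ∀ i, a (i + 1) ≤ a i) (hp0 : p 0 = 1)
    (hp : ∀ n : ℕ, 1 ≤ n → p n = ∑ j ∈ Icc 1 n, (a (j - 1) - a j) * p (n - j)) (n : ℕ) :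
    0 ≤ p n := by
  induction n using Nat.strong_induction_on with
  | _ n ih =>
    rcases Nat.eq_zero_or_pos n with rfl | hn
    · rw [hp0]; exact zero_le_one
    rw [hp n hn, sum_Icc_one_eq_sum_range]
    refine sum_nonneg fun k hk => mul_nonneg ?_ (ih _ (by have := mem_range.1 hk; omega))
    simpa using ha k

lemma mul_sum_le_sum_of_le_sum_mul {a p δ : ℕ → ℝ} {c : ℝ} (ha : ∀ n, 0 ≤ a n)
    (hp : ∀ n, 0 ≤ p n) (hδ : ∀ n, 0 ≤ δ n)
    (hconv : ∀ n, ∑ k ∈ range (n + 1), a k * p (n - k) ≤ 1)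
    (hc : ∀ j, c ≤ ∑ k ∈ range (j + 1), δ k * a (j - k)) (M : ℕ) :
    c * ∑ k ∈ range M, p (k + 1) ≤ ∑ k ∈ range M, δ k := by
  have htail : ∀ n, ∑ l ∈ range n, a l * p (n - l) ≤ 1 := fun n => by
    have h := hconv n
    rw [sum_range_succ] at h
    nlinarith [ha n, hp (n - n)]
  calc c * ∑ k ∈ range M, p (k + 1)
      = ∑ j ∈ range M, c * p (M - j) := by
        rw [mul_sum, ← sum_range_reflect]
        refine sum_congr rfl fun j hj => ?_
        have := mem_range.1 hj
        congr 2
        omega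
    _ ≤ ∑ j ∈ range M, ∑ k ∈ range (j + 1), δ k * (a (j - k) * p (M - k - (j - k))) :=
        sum_le_sum fun j hj => by
          have hM : ∀ k ∈ range (j + 1), M - k - (j - k) = M - j := fun k hk => by
            have := mem_range.1 hk; omega
          rw [sum_congr rfl fun k hk => by rw [hM k hk, ← mul_assoc], ← sum_mul]
          exact mul_le_mul_of_nonneg_right (hc j) (hp _)
    _ = ∑ k ∈ range M, δ k * ∑ l ∈ range (M - k), a l * p (M - k - l) := by
        rw [sum_range_diag_flip M fun k l => δ k * (a l * p (M - k - l))]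
        simp_rw [mul_sum]
    _ ≤ ∑ k ∈ range M, δ k :=
        sum_le_sum fun k _ => mul_le_of_le_one_right (hδ k) (htail (M - k))

lemma gamma_mul_sum_le_rpow {α : ℝ} (hα0 : 0 < α) (hα1 : α < 1) {p : ℕ → ℝ} (hp0 : p 0 = 1)
    (hp : ∀ n : ℕ, 1 ≤ n →
      p n = ∑ j ∈ Icc 1 n, (powIncr (1 - α) (j - 1) - powIncr (1 - α) j) * p (n - j))
    (M : ℕ) :
    Gamma (2 - α) * Gamma (1 + α) * ∑ k ∈ range M, p (k + 1) ≤ (M : ℝ) ^ α := by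
  have ha0 : powIncr (1 - α) 0 = 1 := powIncr_zero (by linarith)
  rw [← sum_range_powIncr hα0.ne' M]
  refine mul_sum_le_sum_of_le_sum_mul (powIncr_nonneg (by linarith))
    (nonneg_of_renewal (powIncr_succ_le (by linarith) (by linarith)) hp0 hp)
    (powIncr_nonneg hα0.le) (fun n => (sum_range_mul_eq_one_of_renewal ha0 hp0 hp n).le)
    (fun j => ?_) M
  have h := le_sum_powIncr_mul_powIncr hα0 hα1.le (by linarith : 0 < 1 - α) (by linarith) j
  rwa [add_sub_cancel, sub_self, rpow_zero, Gamma_one, div_one, mul_one, mul_comm,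
    show 1 - α + 1 = 2 - α by ring, add_comm α] at h

lemma sum_mul_rpow_eq_sum_powIncr_mul {β : ℝ} (hβ : β ≠ 0) (q : ℕ → ℝ) (N : ℕ) :
    ∑ k ∈ range N, q k * ((N - k : ℕ) : ℝ) ^ β =
      ∑ l ∈ range N, powIncr β l * ∑ k ∈ range (N - l), q k := by
  simp_rw [← sum_range_powIncr hβ, mul_sum]
  refine (sum_comm' fun k l => ?_).trans
    (sum_congr rfl fun l _ => sum_congr rfl fun k _ => mul_comm _ _)
  simp only [mem_range]
  omega

lemma sum_powIncr_mul_rpow_le_integral {α β : ℝ} (hα : 0 ≤ α) (hβ : 0 < β) (n : ℕ) :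
    ∑ l ∈ range n, powIncr β l * ((n - 1 - l : ℕ) : ℝ) ^ α ≤
      β * ∫ u in (0 : ℝ)..n, u ^ (β - 1) * ((n : ℝ) - u) ^ α := by
  rcases n.eq_zero_or_pos with rfl | hn
  · simp
  have hint := intervalIntegrable_rpow_mul_sub_rpow hβ (by linarith : 0 < α + 1)
    (Nat.cast_pos.2 hn)
  rw [add_sub_cancel_right] at hint
  have hpiece : ∀ l < n, IntervalIntegrable (fun u => u ^ (β - 1) * ((n : ℝ) - u) ^ α) volume
      (l : ℝ) (l + 1) := fun l hl => hint.mono_set <| by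
    rw [Set.uIcc_of_le (by linarith), Set.uIcc_of_le (by positivity)]
    exact Set.Icc_subset_Icc l.cast_nonneg (by exact_mod_cast hl)
  have hsplit := intervalIntegral.sum_integral_adjacent_intervals (a := fun i : ℕ => (i : ℝ))
    (n := n) fun l hl => by simpa using hpiece l hl
  push_cast at hsplit
  rw [← hsplit, mul_sum]
  refine sum_le_sum fun l hl => ?_
  have hln : l < n := mem_range.1 hl
  have hcast : ((n - 1 - l : ℕ) : ℝ) = n - 1 - l := by
    rw [Nat.cast_sub (by omega), Nat.cast_sub hn, Nat.cast_one]
  calc powIncr β l * ((n - 1 - l : ℕ) : ℝ) ^ α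
      = β * ∫ u in (l : ℝ)..l + 1, u ^ (β - 1) * ((n - 1 - l : ℕ) : ℝ) ^ α := by
        rw [intervalIntegral.integral_mul_const, ← mul_assoc, powIncr,
          ← add_one_rpow_sub_rpow_eq_mul_integral hβ]
    _ ≤ β * ∫ u in (l : ℝ)..l + 1, u ^ (β - 1) * ((n : ℝ) - u) ^ α := by
        gcongr
        refine intervalIntegral.integral_mono_on (by linarith)
          ((intervalIntegral.intervalIntegrable_rpow' (by linarith)).mul_const _)
          (hpiece l hln) fun u hu => ?_
        have hu0 : 0 ≤ u := l.cast_nonneg.trans hu.1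
        rw [hcast]
        exact mul_le_mul_of_nonneg_left (rpow_le_rpow (by rw [← hcast]; positivity)
          (by linarith [hu.2]) hα) (rpow_nonneg hu0 _)

lemma mul_sum_mul_rpow_le {α β c : ℝ} (hα : 0 ≤ α) (hβ : 0 ≤ β) {q : ℕ → ℝ}
    (hq : ∀ M : ℕ, c * ∑ k ∈ range M, q k ≤ (M : ℝ) ^ α) (N : ℕ) :
    c * ∑ k ∈ range N, q k * ((N - k : ℕ) : ℝ) ^ β ≤
      Gamma (1 + β) * Gamma (1 + α) / Gamma (1 + (β + α)) * ((N : ℝ) + 1) ^ (β + α) := by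
  rcases hβ.eq_or_lt with rfl | hβ
  · have hΓ : Gamma (1 + α) ≠ 0 := (Gamma_pos_of_pos (by linarith)).ne'
    simp only [rpow_zero, mul_one, add_zero, zero_add, Gamma_one, one_mul, div_self hΓ]
    exact (hq N).trans (rpow_le_rpow N.cast_nonneg (by linarith) hα)
  have hbeta := integral_rpow_mul_sub_rpow hβ (by linarith : 0 < α + 1) (x := N + 1)
    (by positivity)
  rw [add_sub_cancel_right, ← add_assoc, add_sub_cancel_right] at hbeta
  calc c * ∑ k ∈ range N, q k * ((N - k : ℕ) : ℝ) ^ β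
      = ∑ l ∈ range N, powIncr β l * (c * ∑ k ∈ range (N - l), q k) := by
        rw [sum_mul_rpow_eq_sum_powIncr_mul hβ.ne', mul_sum]
        exact sum_congr rfl fun l _ => by ring
    _ ≤ ∑ l ∈ range N, powIncr β l * ((N - l : ℕ) : ℝ) ^ α :=
        sum_le_sum fun l _ => mul_le_mul_of_nonneg_left (hq _) (powIncr_nonneg hβ.le l)
    _ ≤ ∑ l ∈ range (N + 1), powIncr β l * ((N + 1 - 1 - l : ℕ) : ℝ) ^ α := by
        rw [sum_range_succ, Nat.add_sub_cancel]
        exact le_add_of_nonneg_right (mul_nonneg (powIncr_nonneg hβ.le N) (by positivity))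
    _ ≤ β * ∫ u in (0 : ℝ)..((N + 1 : ℕ) : ℝ), u ^ (β - 1) * (((N + 1 : ℕ) : ℝ) - u) ^ α :=
        sum_powIncr_mul_rpow_le_integral hα hβ (N + 1)
    _ = Gamma (1 + β) * Gamma (1 + α) / Gamma (1 + (β + α)) * ((N : ℝ) + 1) ^ (β + α) := by
        push_cast
        rw [hbeta, add_comm 1 β, Gamma_add_one hβ.ne']
        ring_nf

theorem stmt_4 (α : ℝ) (hα0 : 0 < α) (hα1 : α < 1)
    (a : ℕ → ℝ) (ha : ∀ i : ℕ, a i = ((i : ℝ) + 1) ^ (1 - α) - (i : ℝ) ^ (1 - α))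
    (p : ℕ → ℝ) (hp0 : p 0 = 1)
    (hp : ∀ n : ℕ, 1 ≤ n → p n = ∑ j ∈ Finset.Icc 1 n, (a (j - 1) - a j) * p (n - j)) :
    ∀ m : ℕ, 1 ≤ m → ∀ n : ℕ, 1 ≤ n →
      (Real.Gamma (2 - α) / Real.Gamma (1 + ((m : ℝ) - 1) * α)) *
          ∑ j ∈ Finset.Icc 1 (n - 1), p (n - j) * (j : ℝ) ^ (((m : ℝ) - 1) * α)
        ≤ (n : ℝ) ^ ((m : ℝ) * α) / Real.Gamma (1 + (m : ℝ) * α) := by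
  intro m hm n hn
  obtain rfl : a = powIncr (1 - α) := funext ha
  obtain ⟨N, rfl⟩ : ∃ N, n = N + 1 := ⟨n - 1, by omega⟩
  set β := ((m : ℝ) - 1) * α
  have hβ : 0 ≤ β := mul_nonneg (by simpa using hm) hα0.le
  have key := mul_sum_mul_rpow_le hα0.le hβ (gamma_mul_sum_le_rpow hα0 hα1 hp0 hp) N
  have hsum : ∑ j ∈ Icc 1 (N + 1 - 1), p (N + 1 - j) * (j : ℝ) ^ β =
      ∑ k ∈ range N, p (k + 1) * ((N - k : ℕ) : ℝ) ^ β := by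
    rw [Nat.add_sub_cancel, sum_Icc_one_eq_sum_range, ← sum_range_reflect]
    refine sum_congr rfl fun k hk => ?_
    have := mem_range.1 hk
    congr 4 <;> omega
  have hΓα : 0 < Gamma (1 + α) := Gamma_pos_of_pos (by linarith)
  have hΓβ : 0 < Gamma (1 + β) := Gamma_pos_of_pos (by linarith)
  rw [hsum, show (m : ℝ) * α = β + α by ring, Nat.cast_succ]
  calc Gamma (2 - α) / Gamma (1 + β) * ∑ k ∈ range N, p (k + 1) * ((N - k : ℕ) : ℝ) ^ β
      = Gamma (2 - α) * Gamma (1 + α) * (∑ k ∈ range N, p (k + 1) * ((N - k : ℕ) : ℝ) ^ β) /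
          (Gamma (1 + β) * Gamma (1 + α)) := by
        field_simp
    _ ≤ Gamma (1 + β) * Gamma (1 + α) / Gamma (1 + (β + α)) * ((N : ℝ) + 1) ^ (β + α) /
          (Gamma (1 + β) * Gamma (1 + α)) :=
        div_le_div_of_nonneg_right key (by positivity)
    _ = ((N : ℝ) + 1) ^ (β + α) / Gamma (1 + (β + α)) := by
        field_simp
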